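/- arXiv:1302.4219 — 6 statements merged into one kernel-verified Lean document; each statement's English description precedes it below -/
import Mathlib

section
/- There exists a permutation σ of the vertices of the path P7 = x1...x7 such that σ is a 2-placement of P7, every edge of P7 maps under σ to a pair of vertices at distance at most 4 in P7, dist(x1,σ(x1)) = 1, dist(x7,σ(x7)) ≤ 1, and every cycle of σ has length at most 4. (E.g., σ = (x1 x2 x5)(x3 x7 x6)(x4).) -/
open SimpleGraph

def σ7 : Equiv.Perm (Fin 7) :=
  ⟨fun i => ![1,4,6,3,0,2,5] i, fun i => ![4,0,5,3,1,6,2] i, by decide, by decide⟩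

lemma σ7_cube : σ7 ^ 3 = 1 := by
  ext x
  simp only [pow_succ, pow_zero, one_mul, Equiv.Perm.mul_apply, Equiv.Perm.one_apply]
  fin_cases x <;> rfl

lemma σ7_order : orderOf σ7 ≤ 3 := orderOf_le_of_pow_eq_one (by norm_num) σ7_cube

lemma cyc (v : Fin 7) : (σ7.cycleOf v).support.card ≤ 4 := by
  have hsub : (σ7.cycleOf v).support ⊆ {v, σ7 v, σ7 (σ7 v)} := by
    intro y hy
    rw [Equiv.Perm.mem_support_cycleOf_iff] at hy
    obtain ⟨i, hi, hiy⟩ := hy.1.exists_pow_eq'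
    have hi3 : i < 3 := lt_of_lt_of_le hi σ7_order
    interval_cases i <;> simp_all [pow_succ, Equiv.Perm.mul_apply]
  calc (σ7.cycleOf v).support.card ≤ ({v, σ7 v, σ7 (σ7 v)} : Finset (Fin 7)).card :=
        Finset.card_le_card hsub
    _ ≤ 4 := by
        refine le_trans (Finset.card_insert_le _ _) (Nat.succ_le_succ ?_)
        refine le_trans (Finset.card_insert_le _ _) (Nat.succ_le_succ ?_)
        simp

lemma padj {u v : Fin 7} (h : u.val + 1 = v.val ∨ v.val + 1 = u.val) :
    (pathGraph 7).Adj u v := pathGraph_adj.mpr h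

lemma dist_step {u v : Fin 7} (h : u.val + 1 = v.val ∨ v.val + 1 = u.val) :
    (pathGraph 7).dist u v = 1 := dist_eq_one_iff_adj.mpr (padj h)

lemma dl2 (a b c : Fin 7)
    (h1 : a.val + 1 = b.val ∨ b.val + 1 = a.val)
    (h2 : b.val + 1 = c.val ∨ c.val + 1 = b.val) :
    (pathGraph 7).dist a c ≤ 4 := by
  have := SimpleGraph.dist_le (Walk.cons (padj h1) (Walk.cons (padj h2) Walk.nil))
  simp at this; omega

lemma dl3 (a b c d : Fin 7)
    (h1 : a.val + 1 = b.val ∨ b.val + 1 = a.val)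
    (h2 : b.val + 1 = c.val ∨ c.val + 1 = b.val)
    (h3 : c.val + 1 = d.val ∨ d.val + 1 = c.val) :
    (pathGraph 7).dist a d ≤ 4 := by
  have := SimpleGraph.dist_le (Walk.cons (padj h1) (Walk.cons (padj h2) (Walk.cons (padj h3) Walk.nil)))
  simp at this; omega

/-- a 2-placement of P7 into P7^4, endpoints move distance ≤ 1
(left endpoint exactly 1), all cycles of length at most 4. -/
theorem stmt2 :
    ∃ σ : Equiv.Perm (Fin 7),
      (∀ u v, (pathGraph 7).Adj u v → ¬ (pathGraph 7).Adj (σ u) (σ v)) ∧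
      (∀ u v, (pathGraph 7).Adj u v → (pathGraph 7).dist (σ u) (σ v) ≤ 4) ∧
      (pathGraph 7).dist 0 (σ 0) = 1 ∧
      (pathGraph 7).dist 6 (σ 6) ≤ 1 ∧
      (∀ v, (σ.cycleOf v).support.card ≤ 4) := by
  refine ⟨σ7, ?_, ?_, ?_, ?_, cyc⟩
  · intro u v h
    rw [pathGraph_adj] at h ⊢
    revert h; fin_cases u <;> fin_cases v <;> decide
  · intro u v h
    rw [pathGraph_adj] at h
    fin_cases u <;> fin_cases v <;> simp_all
    · exact dl3 1 2 3 4 (by decide) (by decide) (by decide)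
    · exact dl3 4 3 2 1 (by decide) (by decide) (by decide)
    · exact dl2 4 5 6 (by decide) (by decide)
    · exact dl2 6 5 4 (by decide) (by decide)
    · exact dl3 6 5 4 3 (by decide) (by decide) (by decide)
    · exact dl3 3 4 5 6 (by decide) (by decide) (by decide)
    · exact dl3 3 2 1 0 (by decide) (by decide) (by decide)
    · exact dl3 0 1 2 3 (by decide) (by decide) (by decide)
    · exact dl2 0 1 2 (by decide) (by decide)
    · exact dl2 2 1 0 (by decide) (by decide)
    · exact dl3 2 3 4 5 (by decide) (by decide) (by decide)
    · exact dl3 5 4 3 2 (by decide) (by decide) (by decide)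
  · exact dist_step (by decide)
  · exact le_of_eq (dist_step (by decide))
end

section
/- For every n ≥ 4, if u and v are the end vertices of the path P_n, then there exists a permutation σ of V(P_n) satisfying: (1) σ is a 2-placement of P_n; (2) for every edge xy of P_n, dist(σ(x),σ(y)) ≤ 4; (3) dist(u,σ(u)) = 1 and dist(v,σ(v)) ≤ 1; (4) every cycle of σ has length at most 4. -/
open SimpleGraph

/-- The base pattern: on each block [4k, 4k+3] the 4-cycle (4k, 4k+1, 4k+3, 4k+2). -/
def pfBase (i : ℕ) : ℕ :=
  if i % 4 = 0 then i+1 else if i % 4 = 1 then i+2 else if i % 4 = 2 then i-2 else i-1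

/-- Pattern for n = B+1, B ≡ 0 (mod 4): base blocks plus a fixed last point. -/
def pf1 (B i : ℕ) : ℕ := if i = B then i else pfBase i

/-- Pattern for n = B+6, B ≡ 0 (mod 4): base blocks plus a tail of size 6. -/
def pf2 (B i : ℕ) : ℕ :=
  if i = B then B+1 else if i = B+1 then B+4 else if i = B+2 then B+2 else
  if i = B+3 then B else if i = B+4 then B+3 else if i = B+5 then B+5 else pfBase i

/-- Pattern for n = B+7, B ≡ 0 (mod 4): base blocks plus a tail of size 7. -/
def pf3 (B i : ℕ) : ℕ :=
  if i = B then B+1 else if i = B+1 then B+3 else if i = B+2 then B+6 else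
  if i = B+3 then B+4 else if i = B+4 then B else if i = B+5 then B+2 else
  if i = B+6 then B+5 else pfBase i

/-- Base-block specification. -/
def pQbase (i j : ℕ) : Prop :=
  (i % 4 = 0 ∧ j = i+1) ∨ (i % 4 = 1 ∧ j = i+2) ∨
  (i % 4 = 2 ∧ j + 2 = i) ∨ (i % 4 = 3 ∧ j + 1 = i)

lemma pf_spec0 (i : ℕ) : pQbase i (pfBase i) := by
  unfold pfBase pQbase
  split_ifs <;> omega

set_option maxHeartbeats 1600000 in
lemma pf_spec1 (B i : ℕ) (hB : B % 4 = 0) (hi : i < B + 1) :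
    (i = B ∧ pf1 B i = i) ∨ (i < B ∧ pQbase i (pf1 B i)) := by
  have h0 := pf_spec0 i
  unfold pf1
  unfold pQbase at h0 ⊢
  split_ifs <;> omega

set_option maxHeartbeats 1600000 in
lemma pf_spec2 (B i : ℕ) (hB : B % 4 = 0) (hi : i < B + 6) :
    (B ≤ i ∧
      ((i = B ∧ pf2 B i = B+1) ∨ (i = B+1 ∧ pf2 B i = B+4) ∨
       (i = B+2 ∧ pf2 B i = B+2) ∨ (i = B+3 ∧ pf2 B i = B) ∨
       (i = B+4 ∧ pf2 B i = B+3) ∨ (i = B+5 ∧ pf2 B i = B+5))) ∨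
    (i < B ∧ pQbase i (pf2 B i)) := by
  rcases lt_or_ge i B with hiB | hiB
  · right
    refine ⟨hiB, ?_⟩
    have h0 := pf_spec0 i
    have he : pf2 B i = pfBase i := by
      unfold pf2
      split_ifs <;> first | rfl | (exfalso; omega)
    rw [he]
    exact h0
  · left
    refine ⟨hiB, ?_⟩
    unfold pf2
    split_ifs <;> first | (exfalso; omega) | omega

set_option maxHeartbeats 1600000 in
lemma pf_spec3 (B i : ℕ) (hB : B % 4 = 0) (hi : i < B + 7) :
    (B ≤ i ∧
      ((i = B ∧ pf3 B i = B+1) ∨ (i = B+1 ∧ pf3 B i = B+3) ∨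
       (i = B+2 ∧ pf3 B i = B+6) ∨ (i = B+3 ∧ pf3 B i = B+4) ∨
       (i = B+4 ∧ pf3 B i = B) ∨ (i = B+5 ∧ pf3 B i = B+2) ∨
       (i = B+6 ∧ pf3 B i = B+5))) ∨
    (i < B ∧ pQbase i (pf3 B i)) := by
  rcases lt_or_ge i B with hiB | hiB
  · right
    refine ⟨hiB, ?_⟩
    have h0 := pf_spec0 i
    have he : pf3 B i = pfBase i := by
      unfold pf3
      split_ifs <;> first | rfl | (exfalso; omega)
    rw [he]
    exact h0
  · left
    refine ⟨hiB, ?_⟩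
    unfold pf3
    split_ifs <;> first | (exfalso; omega) | omega

lemma path_dist_le_aux {n : ℕ} (hc : (pathGraph n).Connected) :
    ∀ (k : ℕ) (u v : Fin n), u.val ≤ v.val → v.val ≤ u.val + k →
      (pathGraph n).dist u v ≤ k := by
  intro k
  induction k with
  | zero =>
    intro u v h1 h2
    have : u = v := Fin.ext (by omega)
    rw [this, SimpleGraph.dist_self]
  | succ k ih =>
    intro u v h1 h2
    rcases eq_or_lt_of_le h1 with he | hlt
    · have : u = v := Fin.ext he
      rw [this, SimpleGraph.dist_self]
      omega
    · have hu' : u.val + 1 < n := lt_of_le_of_lt hlt v.isLt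
      set u' : Fin n := ⟨u.val + 1, hu'⟩ with hu'def
      have hadj : (pathGraph n).Adj u u' := pathGraph_adj.mpr (Or.inl rfl)
      have h1' : (pathGraph n).dist u u' = 1 := SimpleGraph.dist_eq_one_iff_adj.mpr hadj
      have h2' : (pathGraph n).dist u' v ≤ k := ih u' v (by simp [hu'def]; omega) (by simp [hu'def]; omega)
      have htri := hc.dist_triangle (u := u) (v := u') (w := v)
      omega

lemma path_dist_le {n : ℕ} (hc : (pathGraph n).Connected) (k : ℕ) (u v : Fin n)
    (h1 : u.val ≤ v.val + k) (h2 : v.val ≤ u.val + k) : (pathGraph n).dist u v ≤ k := by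
  rcases le_total u.val v.val with h | h
  · exact path_dist_le_aux hc k u v h (by omega)
  · rw [SimpleGraph.dist_comm]
    exact path_dist_le_aux hc k v u h (by omega)

lemma cycleOf_support_card_le {m : ℕ} (σ : Equiv.Perm (Fin m)) (v : Fin m) (k : ℕ)
    (hk0 : 0 < k) (hk : k ≤ 4) (hv : (σ ^ k) v = v) :
    (σ.cycleOf v).support.card ≤ 4 := by
  have hsub : (σ.cycleOf v).support ⊆ (Finset.range k).image (fun j => (σ ^ j) v) := by
    intro y hy
    have hsc : σ.SameCycle v y := (Equiv.Perm.mem_support_cycleOf_iff.mp hy).1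
    obtain ⟨i, hi⟩ := hsc
    have hkz : (0 : ℤ) < (k : ℤ) := by exact_mod_cast hk0
    have hper : ((σ ^ (k : ℤ)) ^ (i / (k : ℤ))) v = v :=
      Equiv.Perm.zpow_apply_eq_self_of_apply_eq_self (by simpa using hv) _
    have hmod1 : 0 ≤ i % (k : ℤ) := Int.emod_nonneg _ (by omega)
    have hmod2 : i % (k : ℤ) < (k : ℤ) := Int.emod_lt_of_pos _ hkz
    have hdecomp : (σ ^ i) v = (σ ^ ((i % (k : ℤ)).toNat)) v := by
      have heq : (i % (k : ℤ)) + (k : ℤ) * (i / (k : ℤ)) = i := by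
        have := Int.emod_add_mul_ediv i (k : ℤ)
        omega
      calc (σ ^ i) v = (σ ^ ((i % (k : ℤ)) + (k : ℤ) * (i / (k : ℤ)))) v := by rw [heq]
        _ = (σ ^ (i % (k : ℤ))) ((σ ^ ((k : ℤ) * (i / (k : ℤ)))) v) := by
              rw [zpow_add]; rfl
        _ = (σ ^ (i % (k : ℤ))) v := by rw [zpow_mul, hper]
        _ = (σ ^ ((i % (k : ℤ)).toNat)) v := by
              rw [← zpow_natCast, Int.toNat_of_nonneg hmod1]
    refine Finset.mem_image.mpr ⟨(i % (k : ℤ)).toNat, Finset.mem_range.mpr (by omega), ?_⟩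
    rw [← hdecomp, hi]
  calc (σ.cycleOf v).support.card
      ≤ ((Finset.range k).image (fun j => (σ ^ j) v)).card := Finset.card_le_card hsub
    _ ≤ (Finset.range k).card := Finset.card_image_le
    _ = k := Finset.card_range k
    _ ≤ 4 := hk

/-- Generic builder: any function with the right arithmetic properties gives the
desired permutation. -/
lemma stmt3_build (n : ℕ) (hn : 4 ≤ n) (f : ℕ → ℕ)
    (hf_lt : ∀ i, i < n → f i < n)
    (hinj : ∀ i j, i < n → j < n → f i = f j → i = j)
    (hedge : ∀ i, i + 1 < n →
      (f i + 2 ≤ f (i+1) ∧ f (i+1) ≤ f i + 4) ∨ (f (i+1) + 2 ≤ f i ∧ f i ≤ f (i+1) + 4))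
    (h0 : f 0 = 1)
    (hlast : f (n-1) = n - 1 ∨ f (n-1) + 1 = n - 1)
    (hcyc : ∀ i, i < n → f (f (f i)) = i ∨ f (f (f (f i))) = i) :
    ∃ σ : Equiv.Perm (Fin n),
      (∀ u v, (pathGraph n).Adj u v → ¬ (pathGraph n).Adj (σ u) (σ v)) ∧
      (∀ u v, (pathGraph n).Adj u v → (pathGraph n).dist (σ u) (σ v) ≤ 4) ∧
      (pathGraph n).dist ⟨0, by omega⟩ (σ ⟨0, by omega⟩) = 1 ∧
      (pathGraph n).dist ⟨n - 1, by omega⟩ (σ ⟨n - 1, by omega⟩) ≤ 1 ∧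
      (∀ v, (σ.cycleOf v).support.card ≤ 4) := by
  have hc : (pathGraph n).Connected := by
    obtain ⟨m, rfl⟩ : ∃ m, n = m + 1 := ⟨n - 1, by omega⟩
    exact pathGraph_connected m
  set F : Fin n → Fin n := fun i => ⟨f i.val, hf_lt i.val i.isLt⟩ with hF
  have hFinj : Function.Injective F := by
    intro a b hab
    exact Fin.ext (hinj a.val b.val a.isLt b.isLt (congrArg Fin.val hab))
  have hbij : Function.Bijective F := Finite.injective_iff_bijective.mp hFinj
  set σ := Equiv.ofBijective F hbij with hσ
  have happ : ∀ w : Fin n, (σ w).val = f w.val := fun w => rfl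
  refine ⟨σ, ?_, ?_, ?_, ?_, ?_⟩
  · -- non-adjacency
    intro u v hadj
    rw [pathGraph_adj] at hadj
    rw [pathGraph_adj, happ, happ]
    rcases hadj with h | h
    · have he := hedge u.val (by omega)
      rw [h] at he
      omega
    · have he := hedge v.val (by omega)
      rw [h] at he
      omega
  · -- dist ≤ 4
    intro u v hadj
    rw [pathGraph_adj] at hadj
    refine path_dist_le hc 4 _ _ ?_ ?_ <;> rw [happ, happ]
    · rcases hadj with h | h
      · have he := hedge u.val (by omega); rw [h] at he; omega
      · have he := hedge v.val (by omega); rw [h] at he; omega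
    · rcases hadj with h | h
      · have he := hedge u.val (by omega); rw [h] at he; omega
      · have he := hedge v.val (by omega); rw [h] at he; omega
  · -- first endpoint moves distance exactly 1
    rw [SimpleGraph.dist_eq_one_iff_adj, pathGraph_adj, happ]
    left
    simpa using h0.symm
  · -- last endpoint moves distance ≤ 1
    rcases hlast with hval | hval
    · have : σ ⟨n-1, by omega⟩ = ⟨n-1, by omega⟩ := Fin.ext (by rw [happ]; exact hval)
      rw [this, SimpleGraph.dist_self]
      omega
    · have h1 : (pathGraph n).dist ⟨n-1, by omega⟩ (σ ⟨n-1, by omega⟩) = 1 := by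
        rw [SimpleGraph.dist_eq_one_iff_adj, pathGraph_adj, happ]
        right
        exact hval
      omega
  · -- cycles have length ≤ 4
    intro v
    have hs2 : (σ (σ v)).val = f (f v.val) := by rw [happ, happ]
    have hs3 : (σ (σ (σ v))).val = f (f (f v.val)) := by rw [happ, hs2]
    have hs4 : (σ (σ (σ (σ v)))).val = f (f (f (f v.val))) := by rw [happ, hs3]
    rcases hcyc v.val v.isLt with h | h
    · refine cycleOf_support_card_le σ v 3 (by omega) (by omega) ?_
      have h3 : (σ ^ 3) v = σ (σ (σ v)) := by
        simp [pow_succ, Equiv.Perm.mul_apply]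
      rw [h3]
      exact Fin.ext (by rw [hs3]; exact h)
    · refine cycleOf_support_card_le σ v 4 (by omega) (by omega) ?_
      have h4 : (σ ^ 4) v = σ (σ (σ (σ v))) := by
        simp [pow_succ, Equiv.Perm.mul_apply]
      rw [h4]
      exact Fin.ext (by rw [hs4]; exact h)

set_option maxHeartbeats 3200000 in
/-- for every n ≥ 4 there is a 2-placement of P_n into P_n^4 with the
end vertices moving distance ≤ 1 (the first exactly 1) and all cycles of length ≤ 4. -/
theorem stmt3 (n : ℕ) (hn : 4 ≤ n) :
    ∃ σ : Equiv.Perm (Fin n),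
      (∀ u v, (pathGraph n).Adj u v → ¬ (pathGraph n).Adj (σ u) (σ v)) ∧
      (∀ u v, (pathGraph n).Adj u v → (pathGraph n).dist (σ u) (σ v) ≤ 4) ∧
      (pathGraph n).dist ⟨0, by omega⟩ (σ ⟨0, by omega⟩) = 1 ∧
      (pathGraph n).dist ⟨n - 1, by omega⟩ (σ ⟨n - 1, by omega⟩) ≤ 1 ∧
      (∀ v, (σ.cycleOf v).support.card ≤ 4) := by
  have h4 : n % 4 < 4 := Nat.mod_lt _ (by omega)
  interval_cases h : n % 4
  · -- n % 4 = 0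
    have hB : n % 4 = 0 := h
    refine stmt3_build n hn pfBase ?_ ?_ ?_ ?_ ?_ ?_
    · intro i hi
      have := pf_spec0 i
      unfold pQbase at this
      omega
    · intro i j hi hj hij
      have h1 := pf_spec0 i
      have h2 := pf_spec0 j
      unfold pQbase at h1 h2
      omega
    · intro i hi
      have h1 := pf_spec0 i
      have h2 := pf_spec0 (i+1)
      unfold pQbase at h1 h2
      omega
    · have h1 := pf_spec0 0
      unfold pQbase at h1
      omega
    · have h1 := pf_spec0 (n-1)
      unfold pQbase at h1
      omega
    · intro i hi
      have hl1 := pf_spec0 i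
      have hl2 := pf_spec0 (pfBase i)
      have hl3 := pf_spec0 (pfBase (pfBase i))
      have hl4 := pf_spec0 (pfBase (pfBase (pfBase i)))
      unfold pQbase at hl1 hl2 hl3 hl4
      omega
  · -- n % 4 = 1
    obtain ⟨B, rfl⟩ : ∃ B, n = B + 1 := ⟨n - 1, by omega⟩
    have hB : B % 4 = 0 := by omega
    refine stmt3_build (B+1) hn (pf1 B) ?_ ?_ ?_ ?_ ?_ ?_
    · intro i hi
      have := pf_spec1 B i hB hi
      unfold pQbase at this
      omega
    · intro i j hi hj hij
      have h1 := pf_spec1 B i hB hi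
      have h2 := pf_spec1 B j hB hj
      unfold pQbase at h1 h2
      omega
    · intro i hi
      have h1 := pf_spec1 B i hB (by omega)
      have h2 := pf_spec1 B (i+1) hB hi
      unfold pQbase at h1 h2
      omega
    · have h1 := pf_spec1 B 0 hB (by omega)
      unfold pQbase at h1
      omega
    · have h1 := pf_spec1 B (B+1-1) hB (by omega)
      unfold pQbase at h1
      omega
    · intro i hi
      have hl1 := pf_spec1 B i hB hi
      have l1 : pf1 B i < B + 1 := by unfold pQbase at hl1; omega
      have hl2 := pf_spec1 B (pf1 B i) hB l1
      have l2 : pf1 B (pf1 B i) < B + 1 := by unfold pQbase at hl2; omega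
      have hl3 := pf_spec1 B (pf1 B (pf1 B i)) hB l2
      have l3 : pf1 B (pf1 B (pf1 B i)) < B + 1 := by unfold pQbase at hl3; omega
      have hl4 := pf_spec1 B (pf1 B (pf1 B (pf1 B i))) hB l3
      unfold pQbase at hl1 hl2 hl3 hl4
      omega
  · -- n % 4 = 2
    obtain ⟨B, rfl⟩ : ∃ B, n = B + 6 := ⟨n - 6, by omega⟩
    have hB : B % 4 = 0 := by omega
    refine stmt3_build (B+6) hn (pf2 B) ?_ ?_ ?_ ?_ ?_ ?_
    · intro i hi
      have := pf_spec2 B i hB hi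
      unfold pQbase at this
      omega
    · intro i j hi hj hij
      have h1 := pf_spec2 B i hB hi
      have h2 := pf_spec2 B j hB hj
      unfold pQbase at h1 h2
      omega
    · intro i hi
      have h1 := pf_spec2 B i hB (by omega)
      have h2 := pf_spec2 B (i+1) hB hi
      unfold pQbase at h1 h2
      omega
    · have h1 := pf_spec2 B 0 hB (by omega)
      unfold pQbase at h1
      omega
    · have h1 := pf_spec2 B (B+6-1) hB (by omega)
      unfold pQbase at h1
      omega
    · intro i hi
      have hl1 := pf_spec2 B i hB hi
      have l1 : pf2 B i < B + 6 := by unfold pQbase at hl1; omega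
      have hl2 := pf_spec2 B (pf2 B i) hB l1
      have l2 : pf2 B (pf2 B i) < B + 6 := by unfold pQbase at hl2; omega
      have hl3 := pf_spec2 B (pf2 B (pf2 B i)) hB l2
      have l3 : pf2 B (pf2 B (pf2 B i)) < B + 6 := by unfold pQbase at hl3; omega
      have hl4 := pf_spec2 B (pf2 B (pf2 B (pf2 B i))) hB l3
      unfold pQbase at hl1 hl2 hl3 hl4
      omega
  · -- n % 4 = 3
    obtain ⟨B, rfl⟩ : ∃ B, n = B + 7 := ⟨n - 7, by omega⟩
    have hB : B % 4 = 0 := by omega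
    refine stmt3_build (B+7) hn (pf3 B) ?_ ?_ ?_ ?_ ?_ ?_
    · intro i hi
      have := pf_spec3 B i hB hi
      unfold pQbase at this
      omega
    · intro i j hi hj hij
      have h1 := pf_spec3 B i hB hi
      have h2 := pf_spec3 B j hB hj
      unfold pQbase at h1 h2
      omega
    · intro i hi
      have h1 := pf_spec3 B i hB (by omega)
      have h2 := pf_spec3 B (i+1) hB hi
      unfold pQbase at h1 h2
      omega
    · have h1 := pf_spec3 B 0 hB (by omega)
      unfold pQbase at h1
      omega
    · have h1 := pf_spec3 B (B+7-1) hB (by omega)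
      unfold pQbase at h1
      omega
    · intro i hi
      have hl1 := pf_spec3 B i hB hi
      have l1 : pf3 B i < B + 7 := by unfold pQbase at hl1; omega
      have hl2 := pf_spec3 B (pf3 B i) hB l1
      have l2 : pf3 B (pf3 B i) < B + 7 := by unfold pQbase at hl2; omega
      have hl3 := pf_spec3 B (pf3 B (pf3 B i)) hB l2
      have l3 : pf3 B (pf3 B (pf3 B i)) < B + 7 := by unfold pQbase at hl3; omega
      have hl4 := pf_spec3 B (pf3 B (pf3 B (pf3 B i))) hB l3
      unfold pQbase at hl1 hl2 hl3 hl4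
      omega
end

section
/- For every vertex x of the path P5, there exists a fixed-point-free permutation σ of V(P5) such that σ is a 2-placement of P5, every edge of P5 maps under σ to a pair at distance at most 6, dist(x,σ(x)) ≤ 2, every neighbor y of x and every leaf y satisfies dist(y,σ(y)) ≤ 3, every cycle of σ has length at most 5, and moreover dist(v,σ(v)) ≤ 3 for every vertex v. (E.g., the 5-cycle σ = (x1 x2 x4 x5 x3).) -/
open SimpleGraph

private def σ5 : Equiv.Perm (Fin 5) :=
  ⟨![1, 3, 0, 4, 2], ![2, 0, 4, 1, 3], by decide, by decide⟩

private lemma adj5 {u v : Fin 5} (h : u.val + 1 = v.val) : (pathGraph 5).Adj u v := by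
  rw [pathGraph_adj]; omega

private lemma conn5 : (pathGraph 5).Connected := pathGraph_connected 4

private lemma dist5' : ∀ u v : Fin 5, u.val ≤ v.val →
    (pathGraph 5).dist u v ≤ v.val - u.val
  | u, v, h => by
    by_cases h0 : u = v
    · subst h0; simp
    · have hlt : u.val < v.val := lt_of_le_of_ne h (fun hv => h0 (Fin.ext hv))
      have hu1 : u.val + 1 < 5 := lt_of_le_of_lt hlt v.isLt
      set u' : Fin 5 := ⟨u.val + 1, hu1⟩ with hu'
      have h1 : (pathGraph 5).dist u u' ≤ 1 := by
        simpa using SimpleGraph.dist_le (.cons (adj5 rfl) (.nil : (pathGraph 5).Walk u' u'))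
      have h2 : (pathGraph 5).dist u' v ≤ v.val - u'.val :=
        dist5' u' v hlt
      have hval : u'.val = u.val + 1 := rfl
      have := conn5.dist_triangle (u := u) (v := u') (w := v)
      omega
  termination_by u v _ => v.val - u.val

private lemma dist5 (u v : Fin 5) :
    (pathGraph 5).dist u v ≤ max (v.val - u.val) (u.val - v.val) := by
  rcases le_total u.val v.val with h | h
  · exact le_max_of_le_left (dist5' u v h)
  · rw [SimpleGraph.dist_comm]
    exact le_max_of_le_right (dist5' v u h)

private lemma nadj5 : ∀ u v : Fin 5, (pathGraph 5).Adj u v →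
    ¬ (pathGraph 5).Adj (σ5 u) (σ5 v) := by
  simp only [pathGraph_adj]
  decide

/-- for every vertex x of P5 there is a (P5,x)-well path 2-placement
moving every vertex distance at most 3. -/
theorem stmt5 (x : Fin 5) :
    ∃ σ : Equiv.Perm (Fin 5),
      (∀ v, σ v ≠ v) ∧
      (∀ u v, (pathGraph 5).Adj u v → ¬ (pathGraph 5).Adj (σ u) (σ v)) ∧
      (∀ u v, (pathGraph 5).Adj u v → (pathGraph 5).dist (σ u) (σ v) ≤ 6) ∧
      (pathGraph 5).dist x (σ x) ≤ 2 ∧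
      (∀ y, (pathGraph 5).Adj x y → (pathGraph 5).dist y (σ y) ≤ 3) ∧
      (∀ y, (∃! w, (pathGraph 5).Adj y w) → (pathGraph 5).dist y (σ y) ≤ 3) ∧
      (∀ v, (σ.cycleOf v).support.card ≤ 5) ∧
      (∀ v, (pathGraph 5).dist v (σ v) ≤ 3) := by
  refine ⟨σ5, by decide, nadj5, ?_, ?_, ?_, ?_, ?_, ?_⟩
  · intro u v _
    exact (dist5 (σ5 u) (σ5 v)).trans (by omega)
  · refine (dist5 x (σ5 x)).trans ?_
    fin_cases x <;> decide
  · intro y _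
    refine (dist5 y (σ5 y)).trans ?_
    fin_cases y <;> decide
  · intro y _
    refine (dist5 y (σ5 y)).trans ?_
    fin_cases y <;> decide
  · intro v
    calc (σ5.cycleOf v).support.card ≤ Finset.univ.card :=
          Finset.card_le_card (Finset.subset_univ _)
      _ = 5 := by simp
  · intro v
    refine (dist5 v (σ5 v)).trans ?_
    fin_cases v <;> decide
end

section
/- For every n ≥ 4 and every vertex x of the path P_n, there exists a (P_n,x)-well path 2-placement, i.e., a fixed-point-free permutation σ of V(P_n) such that: σ is a 2-placement of P_n; dist(σ(u),σ(v)) ≤ 6 for every edge uv; dist(x,σ(x)) ≤ 2; dist(y,σ(y)) ≤ 3 for every neighbor y of x and for every leaf y; and every cycle of σ has length at most 5. -/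
open SimpleGraph

/-- tail patterns for the 2-placement of a path -/
def pat (r : ℕ) (b : Bool) (j : ℕ) : ℕ :=
  if r = 0 then (if j = 0 then 1 else if j = 1 then 3 else if j = 2 then 0 else 2)
  else if r = 1 then
    (if j = 0 then 2 else if j = 1 then 0 else if j = 2 then 4 else if j = 3 then 1 else 3)
  else if r = 2 then
    (if b then (if j = 0 then 1 else if j = 1 then 3 else if j = 2 then 5 else if j = 3 then 0
       else if j = 4 then 2 else 4)
     else (if j = 0 then 2 else if j = 1 then 4 else if j = 2 then 0 else if j = 3 then 5
       else if j = 4 then 1 else 3))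
  else
    (if b then (if j = 0 then 1 else if j = 1 then 3 else if j = 2 then 5 else if j = 3 then 0
       else if j = 4 then 6 else if j = 5 then 2 else 4)
     else (if j = 0 then 2 else if j = 1 then 4 else if j = 2 then 0 else if j = 3 then 5
       else if j = 4 then 1 else if j = 5 then 6 else 3))

def badOf (r j : ℕ) : Bool :=
  decide ((r = 2 ∧ (j = 1 ∨ j = 4)) ∨ (r = 3 ∧ (j = 1 ∨ j = 4 ∨ j = 6)))

def Fm (t r : ℕ) (b : Bool) (i : ℕ) : ℕ :=
  if i < t then
    (if i % 4 = 0 then i + 1 else if i % 4 = 1 then i + 2 else if i % 4 = 2 then i - 2 else i - 1)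
  else t + pat r b (i - t)

lemma patP1 : ∀ r < 4, ∀ b : Bool, ∀ j < 7, pat r b j < 4 + r := by decide

lemma patP2 : ∀ r < 4, ∀ b : Bool, ∀ j < 7, j < 4 + r → pat r b j ≠ j := by decide

lemma patP3 : ∀ r < 4, ∀ b : Bool, ∀ j < 7, j + 1 < 4 + r →
    (2 ≤ pat r b (j+1) - pat r b j + (pat r b j - pat r b (j+1)) ∧
      pat r b (j+1) - pat r b j + (pat r b j - pat r b (j+1)) ≤ 6) := by decide

lemma patP4 : ∀ r < 4, ∀ b : Bool, 1 ≤ pat r b 0 ∧ pat r b 0 ≤ 2 := by decide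

lemma patP5 : ∀ r < 4, ∀ b : Bool, ∀ j < 7, j < 4 + r →
    pat r b j - j + (j - pat r b j) ≤ 3 := by decide

lemma patP6 : ∀ r < 4, ∀ j < 7, j < 4 + r →
    pat r (badOf r j) j - j + (j - pat r (badOf r j) j) ≤ 2 := by decide

lemma patP7 : ∀ r < 4, ∀ b : Bool, ∀ j < 7, j < 4 + r →
    (pat r b (pat r b j) = j ∨
     pat r b (pat r b (pat r b j)) = j ∨
     pat r b (pat r b (pat r b (pat r b j))) = j ∨
     pat r b (pat r b (pat r b (pat r b (pat r b j)))) = j) := by decide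

lemma pg_walk {n : ℕ} : ∀ (d : ℕ) (u v : Fin n), u.val + d = v.val →
    ∃ p : (pathGraph n).Walk u v, p.length = d := by
  intro d
  induction d with
  | zero =>
    intro u v h
    have : u = v := Fin.ext (by omega)
    subst this
    exact ⟨SimpleGraph.Walk.nil, rfl⟩
  | succ d ih =>
    intro u v h
    have h1 : u.val + 1 < n := by have := v.isLt; omega
    have hadj : (pathGraph n).Adj u ⟨u.val + 1, h1⟩ := pathGraph_adj.mpr (Or.inl rfl)
    obtain ⟨p, hp⟩ := ih ⟨u.val + 1, h1⟩ v (by show u.val + 1 + d = v.val; omega)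
    exact ⟨SimpleGraph.Walk.cons hadj p, by simp [SimpleGraph.Walk.length_cons, hp]⟩

lemma pg_dist_le {n : ℕ} (u v : Fin n) :
    (pathGraph n).dist u v ≤ v.val - u.val + (u.val - v.val) := by
  rcases le_total u.val v.val with h | h
  · obtain ⟨p, hp⟩ := pg_walk (v.val - u.val) u v (by omega)
    have := SimpleGraph.dist_le p
    omega
  · obtain ⟨p, hp⟩ := pg_walk (u.val - v.val) v u (by omega)
    have := SimpleGraph.dist_le p
    rw [SimpleGraph.dist_comm]
    omega

/-- for every n ≥ 4 and every vertex x of P_n there exists a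
(P_n,x)-well path 2-placement. -/
theorem stmt7 (n : ℕ) (hn : 4 ≤ n) (x : Fin n) :
    ∃ σ : Equiv.Perm (Fin n),
      (∀ v, σ v ≠ v) ∧
      (∀ u v, (pathGraph n).Adj u v → ¬ (pathGraph n).Adj (σ u) (σ v)) ∧
      (∀ u v, (pathGraph n).Adj u v → (pathGraph n).dist (σ u) (σ v) ≤ 6) ∧
      (pathGraph n).dist x (σ x) ≤ 2 ∧
      (∀ y, (pathGraph n).Adj x y → (pathGraph n).dist y (σ y) ≤ 3) ∧
      (∀ y, (∃! w, (pathGraph n).Adj y w) → (pathGraph n).dist y (σ y) ≤ 3) ∧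
      (∀ v, (σ.cycleOf v).support.card ≤ 5) := by
  obtain ⟨t, r, ht4, hr, hnn⟩ : ∃ t r, t % 4 = 0 ∧ r ≤ 3 ∧ n = t + 4 + r :=
    ⟨n - 4 - n % 4, n % 4, by omega, by omega, by omega⟩
  have hrlt : r < 4 := by omega
  set b := badOf r (x.val - t) with hb
  set f := Fm t r b with hfdef
  have FmFull : ∀ i, i < t → f i =
      (if i % 4 = 0 then i + 1 else if i % 4 = 1 then i + 2 else if i % 4 = 2 then i - 2
        else i - 1) := by
    intro i h
    show Fm t r b i = _
    unfold Fm
    rw [if_pos h]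
  have FmTail : ∀ j, f (t + j) = t + pat r b j := by
    intro j
    show Fm t r b (t + j) = _
    unfold Fm
    rw [if_neg (by omega), Nat.add_sub_cancel_left]
  have hFlt : ∀ i, i < n → f i < n := by
    intro i hi
    rcases lt_or_ge i t with h | h
    · rw [FmFull i h]; split_ifs <;> omega
    · obtain ⟨j, rfl⟩ : ∃ j, i = t + j := ⟨i - t, by omega⟩
      rw [FmTail]
      have := patP1 r hrlt b j (by omega)
      omega
  have hFne : ∀ i, i < n → f i ≠ i := by
    intro i hi
    rcases lt_or_ge i t with h | h
    · rw [FmFull i h]; split_ifs <;> omega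
    · obtain ⟨j, rfl⟩ : ∃ j, i = t + j := ⟨i - t, by omega⟩
      rw [FmTail]
      have := patP2 r hrlt b j (by omega) (by omega)
      omega
  have hdisp : ∀ i, i < n → f i - i + (i - f i) ≤ 3 := by
    intro i hi
    rcases lt_or_ge i t with h | h
    · rw [FmFull i h]; split_ifs <;> omega
    · obtain ⟨j, rfl⟩ : ∃ j, i = t + j := ⟨i - t, by omega⟩
      rw [FmTail]
      have := patP5 r hrlt b j (by omega) (by omega)
      omega
  have hdispx : f x.val - x.val + (x.val - f x.val) ≤ 2 := by
    rcases lt_or_ge x.val t with h | h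
    · rw [FmFull _ h]; split_ifs <;> omega
    · obtain ⟨j, hj⟩ : ∃ j, (x.val : ℕ) = t + j := ⟨x.val - t, by omega⟩
      have hbj : b = badOf r j := by rw [hb]; congr 1; omega
      rw [hj, FmTail, hbj]
      have := patP6 r hrlt j (by have := x.isLt; omega) (by have := x.isLt; omega)
      omega
  have hadj : ∀ i, i + 1 < n →
      2 ≤ f (i+1) - f i + (f i - f (i+1)) ∧ f (i+1) - f i + (f i - f (i+1)) ≤ 6 := by
    intro i h
    rcases lt_or_ge (i+1) t with h1 | h1
    · rw [FmFull i (by omega), FmFull (i+1) h1]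
      split_ifs <;> omega
    · rcases lt_or_ge i t with h2 | h2
      · have he : i + 1 = t + 0 := by omega
        rw [FmFull i h2, he, FmTail]
        have := patP4 r hrlt b
        split_ifs <;> omega
      · obtain ⟨j, rfl⟩ : ∃ j, i = t + j := ⟨i - t, by omega⟩
        have he : t + j + 1 = t + (j + 1) := by omega
        rw [he, FmTail, FmTail]
        have := patP3 r hrlt b j (by omega) (by omega)
        omega
  have hcyc : ∀ i, i < n → f^[2] i = i ∨ f^[3] i = i ∨ f^[4] i = i ∨ f^[5] i = i := by
    intro i hi
    rcases lt_or_ge i t with h | h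
    · right; right; left
      show f (f (f (f i))) = i
      have h4 : i % 4 = 0 ∨ i % 4 = 1 ∨ i % 4 = 2 ∨ i % 4 = 3 := by omega
      rcases h4 with h4 | h4 | h4 | h4
      · rw [show f i = i + 1 by rw [FmFull i h]; split_ifs <;> omega,
            show f (i+1) = i + 3 by rw [FmFull (i+1) (by omega)]; split_ifs <;> omega,
            show f (i+3) = i + 2 by rw [FmFull (i+3) (by omega)]; split_ifs <;> omega,
            show f (i+2) = i by rw [FmFull (i+2) (by omega)]; split_ifs <;> omega]
      · rw [show f i = i + 2 by rw [FmFull i h]; split_ifs <;> omega,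
            show f (i+2) = i + 1 by rw [FmFull (i+2) (by omega)]; split_ifs <;> omega,
            show f (i+1) = i - 1 by rw [FmFull (i+1) (by omega)]; split_ifs <;> omega,
            show f (i-1) = i by rw [FmFull (i-1) (by omega)]; split_ifs <;> omega]
      · rw [show f i = i - 2 by rw [FmFull i h]; split_ifs <;> omega,
            show f (i-2) = i - 1 by rw [FmFull (i-2) (by omega)]; split_ifs <;> omega,
            show f (i-1) = i + 1 by rw [FmFull (i-1) (by omega)]; split_ifs <;> omega,
            show f (i+1) = i by rw [FmFull (i+1) (by omega)]; split_ifs <;> omega]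
      · rw [show f i = i - 1 by rw [FmFull i h]; split_ifs <;> omega,
            show f (i-1) = i - 3 by rw [FmFull (i-1) (by omega)]; split_ifs <;> omega,
            show f (i-3) = i - 2 by rw [FmFull (i-3) (by omega)]; split_ifs <;> omega,
            show f (i-2) = i by rw [FmFull (i-2) (by omega)]; split_ifs <;> omega]
    · obtain ⟨j, rfl⟩ : ∃ j, i = t + j := ⟨i - t, by omega⟩
      rcases patP7 r hrlt b j (by omega) (by omega) with hc | hc | hc | hc
      · left; show f (f (t+j)) = t + j
        rw [FmTail, FmTail, hc]
      · right; left; show f (f (f (t+j))) = t + j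
        rw [FmTail, FmTail, FmTail, hc]
      · right; right; left; show f (f (f (f (t+j)))) = t + j
        rw [FmTail, FmTail, FmTail, FmTail, hc]
      · right; right; right; show f (f (f (f (f (t+j))))) = t + j
        rw [FmTail, FmTail, FmTail, FmTail, FmTail, hc]
  have h60 : ∀ i, i < n → f^[60] i = i := by
    intro i hi
    rcases hcyc i hi with h | h | h | h
    · rw [show (60:ℕ) = 2 * 30 by norm_num, Function.iterate_mul]
      exact Function.iterate_fixed h 30
    · rw [show (60:ℕ) = 3 * 20 by norm_num, Function.iterate_mul]
      exact Function.iterate_fixed h 20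
    · rw [show (60:ℕ) = 4 * 15 by norm_num, Function.iterate_mul]
      exact Function.iterate_fixed h 15
    · rw [show (60:ℕ) = 5 * 12 by norm_num, Function.iterate_mul]
      exact Function.iterate_fixed h 12
  let g : Fin n → Fin n := fun v => ⟨f v.val, hFlt v.val v.isLt⟩
  have hginj : Function.Injective g := by
    intro a c hac
    have h1 : f a.val = f c.val := congrArg Fin.val hac
    have ha := h60 a.val a.isLt
    have hc := h60 c.val c.isLt
    rw [show (60:ℕ) = 59 + 1 from rfl, Function.iterate_succ_apply] at ha hc
    exact Fin.ext (by rw [← ha, ← hc, h1])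
  let σ : Equiv.Perm (Fin n) := Equiv.ofBijective g (Finite.injective_iff_bijective.mp hginj)
  have hσ : ∀ v : Fin n, (σ v).val = f v.val := fun v => rfl
  have hpow : ∀ (k : ℕ) (v : Fin n), ((σ ^ k) v).val = f^[k] v.val := by
    intro k
    induction k with
    | zero => intro v; simp
    | succ k ih =>
      intro v
      rw [pow_succ, Equiv.Perm.mul_apply, ih (σ v), hσ v, ← Function.iterate_succ_apply]
  refine ⟨σ, ?_, ?_, ?_, ?_, ?_, ?_, ?_⟩
  · intro v h
    have h1 := congrArg Fin.val h
    rw [hσ v] at h1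
    exact hFne v.val v.isLt h1
  · intro u v huv him
    rw [pathGraph_adj] at huv him
    rw [hσ u, hσ v] at him
    rcases huv with h | h
    · have hD := (hadj u.val (by have := v.isLt; omega)).1
      have he : f v.val = f (u.val + 1) := by rw [h]
      omega
    · have hD := (hadj v.val (by have := u.isLt; omega)).1
      have he : f u.val = f (v.val + 1) := by rw [h]
      omega
  · intro u v huv
    refine le_trans (pg_dist_le (σ u) (σ v)) ?_
    rw [pathGraph_adj] at huv
    rw [hσ u, hσ v]
    rcases huv with h | h
    · have hD := (hadj u.val (by have := v.isLt; omega)).2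
      have he : f v.val = f (u.val + 1) := by rw [h]
      omega
    · have hD := (hadj v.val (by have := u.isLt; omega)).2
      have he : f u.val = f (v.val + 1) := by rw [h]
      omega
  · refine le_trans (pg_dist_le x (σ x)) ?_
    rw [hσ x]
    omega
  · intro y _
    refine le_trans (pg_dist_le y (σ y)) ?_
    rw [hσ y]
    have := hdisp y.val y.isLt
    omega
  · intro y _
    refine le_trans (pg_dist_le y (σ y)) ?_
    rw [hσ y]
    have := hdisp y.val y.isLt
    omega
  · intro v
    have hex : ∃ m, 1 ≤ m ∧ m ≤ 5 ∧ (σ ^ m) v = v := by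
      rcases hcyc v.val v.isLt with h | h | h | h
      · exact ⟨2, by norm_num, by norm_num, Fin.ext (by rw [hpow]; exact h)⟩
      · exact ⟨3, by norm_num, by norm_num, Fin.ext (by rw [hpow]; exact h)⟩
      · exact ⟨4, by norm_num, by norm_num, Fin.ext (by rw [hpow]; exact h)⟩
      · exact ⟨5, by norm_num, by norm_num, Fin.ext (by rw [hpow]; exact h)⟩
    obtain ⟨m, hm1, hm5, hmfix⟩ := hex
    have hfixmul : ∀ q : ℕ, ((σ ^ m) ^ q) v = v := by
      intro q
      induction q with
      | zero => simp
      | succ q ih => rw [pow_succ, Equiv.Perm.mul_apply, hmfix, ih]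
    have hsame : ∀ i : ℕ, (σ ^ i) v = (σ ^ (i % m)) v := by
      intro i
      conv_lhs => rw [show i = i % m + m * (i / m) from (Nat.mod_add_div i m).symm]
      rw [pow_add, Equiv.Perm.mul_apply, pow_mul, hfixmul]
    have hsub : (σ.cycleOf v).support ⊆
        ({v, σ v, (σ^2) v, (σ^3) v, (σ^4) v} : Finset (Fin n)) := by
      intro y hy
      rw [Equiv.Perm.mem_support_cycleOf_iff] at hy
      obtain ⟨i, hi, rfl⟩ := hy.1.exists_pow_eq'
      rw [hsame i]
      have h5 : i % m = 0 ∨ i % m = 1 ∨ i % m = 2 ∨ i % m = 3 ∨ i % m = 4 := by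
        have := Nat.mod_lt i (show 0 < m by omega)
        omega
      rcases h5 with h | h | h | h | h <;> rw [h] <;>
        simp [Finset.mem_insert, pow_zero, pow_one]
    refine le_trans (Finset.card_le_card hsub) ?_
    have h1 := Finset.card_insert_le v ({σ v, (σ^2) v, (σ^3) v, (σ^4) v} : Finset (Fin n))
    have h2 := Finset.card_insert_le (σ v) ({(σ^2) v, (σ^3) v, (σ^4) v} : Finset (Fin n))
    have h3 := Finset.card_insert_le ((σ^2) v) ({(σ^3) v, (σ^4) v} : Finset (Fin n))
    have h4 := Finset.card_insert_le ((σ^3) v) ({(σ^4) v} : Finset (Fin n))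
    have h5 : ({(σ^4) v} : Finset (Fin n)).card = 1 := Finset.card_singleton _
    omega
end

section
/- Let T be the spider tree with center y adjacent to x and to y1,...,y_{n'} (n' ≥ 3), and x adjacent additionally to a leaf x1 (so T is a star K_{1,n'+1} with one edge subdivided appropriately: vertices x1, x, y, y1,...,y_{n'}, edges x1x, xy, yy_i). If n' = 2k+1 is odd, then σ = (x1 x y1 y)·∏_{i=1}^{k}(y_{2i} y_{2i+1}) is a fixed-point-free 2-placement of T with every edge mapping to a pair at distance at most 6, dist(v,σ(v)) ≤ 4 for every leaf v, and every cycle of σ has length at most 5. -/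
/-!
Every vertex of the spider is within distance 2 of the centre `y`, so its diameter is at most 4,
which gives both distance bounds at once. The placement has order 4, so no cycle is longer than 4.
It is a 2-placement because it sends the edges `x1 x`, `x y`, `y y1` to the non-edges `x y1`,
`y1 x1`, `x1 y`, and every other edge `y y_i` to the non-edge `x1 y_j`.
-/

open SimpleGraph

/-- The spider tree with vertices x1 = 0, x = 1, y = 2 and y_i = i + 2 for
i = 1, ..., n' (with n' = 2k+1), edges x1-x, x-y and y-y_i. -/
def spider (k : ℕ) : SimpleGraph (Fin (2 * k + 4)) :=
  SimpleGraph.fromRel (fun a b =>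
    ((a : ℕ) = 0 ∧ (b : ℕ) = 1) ∨ ((a : ℕ) = 1 ∧ (b : ℕ) = 2) ∨
      ((a : ℕ) = 2 ∧ 3 ≤ (b : ℕ)))

theorem Equiv.Perm.card_support_cycleOf_le_of_pow_eq_one {α : Type*} [Fintype α] [DecidableEq α]
    {σ : Equiv.Perm α} {n : ℕ} (hn : 0 < n) (h : σ ^ n = 1) (x : α) :
    (σ.cycleOf x).support.card ≤ n := by
  by_cases hx : σ x = x
  · simp [(σ.cycleOf_eq_one_iff).mpr hx]
  · rw [← (σ.isCycle_cycleOf hx).orderOf]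
    exact Nat.le_of_dvd hn ((σ.orderOf_cycleOf_dvd_orderOf x).trans (orderOf_dvd_of_pow_eq_one h))

theorem SimpleGraph.dist_le_two_mul_of_forall_walk_to_le {V : Type*} {G : SimpleGraph V} {r : ℕ}
    (h : ∃ c, ∀ v, ∃ p : G.Walk v c, p.length ≤ r) (u v : V) : G.dist u v ≤ 2 * r := by
  obtain ⟨c, h⟩ := h
  obtain ⟨p, hp⟩ := h u
  obtain ⟨q, hq⟩ := h v
  calc G.dist u v ≤ (p.append q.reverse).length := dist_le _
    _ ≤ 2 * r := by simp only [Walk.length_append, Walk.length_reverse]; omega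

def spiderPlace (n : ℕ) : ℕ :=
  if n = 0 then 1 else if n = 1 then 3 else if n = 2 then 0 else if n = 3 then 2
  else if n % 2 = 0 then n + 1 else n - 1

lemma spiderPlace_lt {k n : ℕ} (h : n < 2 * k + 4) : spiderPlace n < 2 * k + 4 := by
  unfold spiderPlace; split_ifs <;> omega

lemma spiderPlace_ne (n : ℕ) : spiderPlace n ≠ n := by
  unfold spiderPlace; split_ifs <;> omega

lemma spiderPlace_cases (n : ℕ) :
    (n = 0 ∧ spiderPlace n = 1) ∨ (n = 1 ∧ spiderPlace n = 3) ∨ (n = 2 ∧ spiderPlace n = 0) ∨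
      (n = 3 ∧ spiderPlace n = 2) ∨ (4 ≤ n ∧ 4 ≤ spiderPlace n) := by
  unfold spiderPlace; split_ifs <;> omega

lemma spiderPlace_of_even {n : ℕ} (h4 : 4 ≤ n) (he : n % 2 = 0) : spiderPlace n = n + 1 := by
  unfold spiderPlace; split_ifs <;> omega

lemma spiderPlace_of_odd {n : ℕ} (h4 : 4 ≤ n) (ho : n % 2 = 1) : spiderPlace n = n - 1 := by
  unfold spiderPlace; split_ifs <;> omega

lemma spiderPlace_spiderPlace_of_four_le {n : ℕ} (h : 4 ≤ n) :
    spiderPlace (spiderPlace n) = n := by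
  rcases Nat.mod_two_eq_zero_or_one n with he | ho
  · rw [spiderPlace_of_even h he, spiderPlace_of_odd (by omega) (by omega)]; omega
  · rw [spiderPlace_of_odd h ho, spiderPlace_of_even (by omega) (by omega)]; omega

lemma spiderPlace_iterate_four (n : ℕ) : spiderPlace^[4] n = n := by
  rcases Nat.lt_or_ge n 4 with h | h
  · interval_cases n <;> rfl
  · simp only [Function.iterate_succ, Function.comp_apply, Function.iterate_zero, id_eq,
      spiderPlace_spiderPlace_of_four_le h]

def spiderPlacement (k : ℕ) : Equiv.Perm (Fin (2 * k + 4)) where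
  toFun v := ⟨spiderPlace v, spiderPlace_lt v.isLt⟩
  invFun v := ⟨spiderPlace^[3] v, by
    simp only [Function.iterate_succ, Function.comp_apply, Function.iterate_zero, id_eq]
    exact spiderPlace_lt (spiderPlace_lt (spiderPlace_lt v.isLt))⟩
  left_inv v := Fin.ext (spiderPlace_iterate_four v)
  right_inv v := Fin.ext (spiderPlace_iterate_four v)

lemma spiderPlacement_val (k : ℕ) (v : Fin (2 * k + 4)) :
    (spiderPlacement k v : ℕ) = spiderPlace v := rfl

lemma spiderPlacement_pow_four (k : ℕ) : spiderPlacement k ^ 4 = 1 := by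
  ext v
  rw [Equiv.Perm.coe_pow]
  exact spiderPlace_iterate_four v

lemma spider_adj_iff (k : ℕ) (u v : Fin (2 * k + 4)) :
    (spider k).Adj u v ↔
      ((u : ℕ) = 0 ∧ (v : ℕ) = 1) ∨ ((u : ℕ) = 1 ∧ (v : ℕ) = 0) ∨
      ((u : ℕ) = 1 ∧ (v : ℕ) = 2) ∨ ((u : ℕ) = 2 ∧ (v : ℕ) = 1) ∨
      ((u : ℕ) = 2 ∧ 3 ≤ (v : ℕ)) ∨ ((v : ℕ) = 2 ∧ 3 ≤ (u : ℕ)) := by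
  simp only [spider, fromRel_adj, ne_eq, Fin.ext_iff]
  omega

lemma spiderPlacement_not_adj (k : ℕ) {u v : Fin (2 * k + 4)} (huv : (spider k).Adj u v) :
    ¬ (spider k).Adj (spiderPlacement k u) (spiderPlacement k v) := by
  rw [spider_adj_iff] at huv
  rw [spider_adj_iff, spiderPlacement_val, spiderPlacement_val]
  have hu := spiderPlace_cases u
  have hv := spiderPlace_cases v
  omega

lemma spider_exists_center (k : ℕ) :
    ∃ c, ∀ v : Fin (2 * k + 4), ∃ p : (spider k).Walk v c, p.length ≤ 2 := by
  have adj (a b : Fin (2 * k + 4)) := (spider_adj_iff k a b).mpr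
  refine ⟨⟨2, by omega⟩, fun v => ?_⟩
  rcases Nat.lt_or_ge v 3 with h | h
  · interval_cases hv : (v : ℕ)
    · exact ⟨.cons (adj v ⟨1, by omega⟩ (by simp [hv])) (.cons (adj _ _ (by simp)) .nil), le_rfl⟩
    · exact ⟨.cons (adj v _ (by simp [hv])) .nil, by simp⟩
    · exact ⟨Walk.nil.copy (Fin.ext hv).symm rfl, by simp⟩
  · exact ⟨.cons (adj v _ (by simp [h])) .nil, by simp⟩

lemma spider_dist_le_four (k : ℕ) (u v : Fin (2 * k + 4)) : (spider k).dist u v ≤ 4 :=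
  dist_le_two_mul_of_forall_walk_to_le (spider_exists_center k) u v

/-- for odd n' = 2k+1 ≥ 3, the permutation
(x1 x y1 y) · ∏_{i=1}^{k} (y_{2i} y_{2i+1}) is a fixed-point-free 2-placement of the
spider into its 6-th power, every leaf moves distance at most 4, and every cycle has
length at most 5. -/
theorem stmt11 (k : ℕ) :
    ∃ σ : Equiv.Perm (Fin (2 * k + 4)),
      -- σ is (x1 x y1 y)·∏ (y_{2i} y_{2i+1}) : x1→x, x→y1, y1→y, y→x1, y_{2i}↔y_{2i+1}
      (σ ⟨0, by omega⟩ = ⟨1, by omega⟩ ∧ σ ⟨1, by omega⟩ = ⟨3, by omega⟩ ∧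
        σ ⟨3, by omega⟩ = ⟨2, by omega⟩ ∧ σ ⟨2, by omega⟩ = ⟨0, by omega⟩ ∧
        ∀ i (_ : 1 ≤ i) (_ : i ≤ k),
          σ ⟨2 * i + 2, by omega⟩ = ⟨2 * i + 3, by omega⟩ ∧
            σ ⟨2 * i + 3, by omega⟩ = ⟨2 * i + 2, by omega⟩) ∧
      (∀ v, σ v ≠ v) ∧
      (∀ u v, (spider k).Adj u v → ¬ (spider k).Adj (σ u) (σ v)) ∧
      (∀ u v, (spider k).Adj u v → (spider k).dist (σ u) (σ v) ≤ 6) ∧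
      (∀ v, (∃! w, (spider k).Adj v w) → (spider k).dist v (σ v) ≤ 4) ∧
      (∀ v, (σ.cycleOf v).support.card ≤ 5) := by
  refine ⟨spiderPlacement k, ⟨rfl, rfl, rfl, rfl, fun i hi _ => ⟨?_, ?_⟩⟩,
    fun v h => spiderPlace_ne v (congrArg Fin.val h), fun u v => spiderPlacement_not_adj k,
    fun u v _ => (spider_dist_le_four k _ _).trans (by norm_num),
    fun v _ => spider_dist_le_four k _ _,
    fun v => ?_⟩
  · exact Fin.ext (spiderPlace_of_even (n := 2 * i + 2) (by omega) (by omega))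
  · exact Fin.ext ((spiderPlace_of_odd (n := 2 * i + 3) (by omega) (by omega)).trans (by simp))
  · exact (Equiv.Perm.card_support_cycleOf_le_of_pow_eq_one (by norm_num)
      (spiderPlacement_pow_four k) v).trans (by norm_num)
end

section
/- Let G be a graph of order n, let I be a maximum independent set of G, and suppose G admits an embedding into K_n, i.e., a permutation σ of V(G) with σ*(E(G)) ∩ E(G) = ∅. Then any labeling f : V(G) → {1,...,p} preserved by such an embedding satisfies p ≤ |I| + ⌊(n − |I|)/2⌋; that is, λ²(G) ≤ |I| + ⌊(n − |I|)/2⌋. -/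
open SimpleGraph

/-- if I is a maximum independent set of G and f is a surjective
labeling with p labels preserved by an embedding of G into its complement, then
p ≤ |I| + ⌊(n - |I|)/2⌋. -/
theorem stmt17 {V : Type*} [Fintype V] (G : SimpleGraph V)
    (I : Finset V) (hI : ∀ u ∈ I, ∀ v ∈ I, ¬ G.Adj u v)
    (hImax : ∀ J : Finset V, (∀ u ∈ J, ∀ v ∈ J, ¬ G.Adj u v) → J.card ≤ I.card)
    (p : ℕ) (f : V → Fin p) (hf : Function.Surjective f)
    (σ : Equiv.Perm V)
    (hσ : ∀ u v, G.Adj u v → ¬ G.Adj (σ u) (σ v))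
    (hpres : ∀ v, f (σ v) = f v) :
    p ≤ I.card + (Fintype.card V - I.card) / 2 := by
  classical
  set n := Fintype.card V with hn
  set fib : Fin p → Finset V := fun c => Finset.univ.filter (fun v => f v = c) with hfib
  -- a representative of each fiber
  set r : Fin p → V := fun c => (hf c).choose with hrdef
  have hr : ∀ c, f (r c) = c := fun c => (hf c).choose_spec
  have hrinj : Function.Injective r := by
    intro c d h
    have := hr c
    rw [h, hr d] at this
    exact this.symm
  have hfibmem : ∀ c, r c ∈ fib c := by
    intro c
    simp [hfib, hr c]
  -- fibers are nonempty
  have hne : ∀ c, 1 ≤ (fib c).card := fun c =>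
    Finset.card_pos.mpr ⟨r c, hfibmem c⟩
  -- uniqueness in singleton fibers
  have huniq : ∀ c, (fib c).card = 1 → ∀ u, f u = c → u = r c := by
    intro c hc u hu
    obtain ⟨x, hx⟩ := Finset.card_eq_one.mp hc
    have h1 : u ∈ fib c := by simp [hfib, hu]
    have h2 : r c ∈ fib c := hfibmem c
    rw [hx, Finset.mem_singleton] at h1 h2
    rw [h1, h2]
  set A : Finset (Fin p) := Finset.univ.filter (fun c => (fib c).card = 1) with hA
  -- total count
  have hcount : ∑ c, (fib c).card = n := by
    rw [hn, ← Finset.card_univ]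
    exact (Finset.card_eq_sum_card_fiberwise (fun v _ => Finset.mem_univ (f v))).symm
  -- split the sum
  have hsplit : ∑ c ∈ A, (fib c).card + ∑ c ∈ Finset.univ.filter (fun c => ¬ (fib c).card = 1), (fib c).card = n := by
    rw [← hcount]
    exact Finset.sum_filter_add_sum_filter_not _ _ _
  have hAsum : ∑ c ∈ A, (fib c).card = A.card := by
    rw [Finset.card_eq_sum_ones]
    apply Finset.sum_congr rfl
    intro c hc
    exact (Finset.mem_filter.mp hc).2
  have hBsum : 2 * (Finset.univ.filter (fun c => ¬ (fib c).card = 1)).card ≤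
      ∑ c ∈ Finset.univ.filter (fun c => ¬ (fib c).card = 1), (fib c).card := by
    have : 2 * (Finset.univ.filter (fun c => ¬ (fib c).card = 1)).card =
        ∑ _c ∈ Finset.univ.filter (fun c => ¬ (fib c).card = 1), 2 := by
      rw [Finset.sum_const, smul_eq_mul, mul_comm]
    rw [this]
    apply Finset.sum_le_sum
    intro c hc
    have h1 := hne c
    have h2 := (Finset.mem_filter.mp hc).2
    omega
  have hp : A.card + (Finset.univ.filter (fun c => ¬ (fib c).card = 1)).card = p := by
    rw [Finset.card_filter_add_card_filter_not, Finset.card_univ, Fintype.card_fin]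
  -- image of A under r is independent
  set J : Finset V := A.image r with hJ
  have hJcard : J.card = A.card := Finset.card_image_of_injective _ hrinj
  have hJind : ∀ u ∈ J, ∀ v ∈ J, ¬ G.Adj u v := by
    intro u hu v hv hadj
    obtain ⟨c, hc, rfl⟩ := Finset.mem_image.mp hu
    obtain ⟨d, hd, rfl⟩ := Finset.mem_image.mp hv
    have hc1 : (fib c).card = 1 := (Finset.mem_filter.mp hc).2
    have hd1 : (fib d).card = 1 := (Finset.mem_filter.mp hd).2
    have hσc : σ (r c) = r c := by
      apply huniq c hc1
      rw [hpres, hr]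
    have hσd : σ (r d) = r d := by
      apply huniq d hd1
      rw [hpres, hr]
    exact hσ _ _ hadj (by rw [hσc, hσd]; exact hadj)
  have hAI : A.card ≤ I.card := hJcard ▸ hImax J hJind
  have hIn : I.card ≤ n := by rw [hn, ← Finset.card_univ]; exact Finset.card_le_univ I
  omega
end
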